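/- arXiv:2108.06358 — 2 statements merged into one kernel-verified Lean document; each statement's English description precedes it below -/
import Mathlib

section
/- Let H = ℍ[ℚ; −2, −26] and let O be the ℤ-submodule of H spanned by 1, i, (2 + i + j)/4, (2 + 2i + ij)/4 (this is a subring of H), and set u = ij/2 ∈ O, so nrm(u) = 13. Let 𝒲 be the subgroup of invertible 2×2 matrices over H generated by the Cohn matrices W(α), α ∈ O. Then for every γ ∈ 𝒲 with entries γ = [[a, b], [c, d]]: (i) c·u·conj(d) − d·u·conj(c) is scalar and lies in 13ℤ; (ii) a·u·conj(b) − b·u·conj(a) is scalar and lies in 13ℤ; (iii) a·u·conj(d) − b·u·conj(c) − u ∈ 13·O. -/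
open Quaternion
open scoped Quaternion

/-- The Cohn matrix `W(α) = [[α, 1], [−1, 0]]` as an invertible 2×2 matrix over a ring,
with inverse `[[0, −1], [1, α]]`. -/
def CohnUnit {A : Type*} [Ring A] (α : A) : (Matrix (Fin 2) (Fin 2) A)ˣ where
  val := !![α, 1; -1, 0]
  inv := !![0, -1; 1, α]
  val_inv := by
    ext i j
    fin_cases i <;> fin_cases j <;>
      simp [Matrix.mul_apply, Fin.sum_univ_succ, Matrix.one_apply]
  inv_val := by
    ext i j
    fin_cases i <;> fin_cases j <;>
      simp [Matrix.mul_apply, Fin.sum_univ_succ, Matrix.one_apply]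

/-- The maximal order `ℤ ⊕ ℤi ⊕ ℤ(2+i+j)/4 ⊕ ℤ(2+2i+ij)/4` of `ℍ[ℚ; −2, −26]`. -/
noncomputable def order : Submodule ℤ ℍ[ℚ, -2, -26] :=
  Submodule.span ℤ
    ({1, ⟨0, 1, 0, 0⟩, ⟨1 / 2, 1 / 4, 1 / 4, 0⟩, ⟨1 / 2, 1 / 2, 0, 1 / 4⟩} :
      Set ℍ[ℚ, -2, -26])

/-- `𝒲`: the subgroup of invertible 2×2 matrices over `ℍ[ℚ; −2, −26]` generated by the
Cohn matrices `W(α)`, `α ∈ O`. -/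
noncomputable def CohnSubgroup : Subgroup (Matrix (Fin 2) (Fin 2) ℍ[ℚ, -2, -26])ˣ :=
  Subgroup.closure {γ | ∃ α ∈ order, γ = CohnUnit α}

/-! With `J = [[0, u], [−u, 0]]`, every `γ ∈ 𝒲` satisfies `γ J γᴴ ≡ J` entrywise modulo `13 O`:
the units `γ` with `γ, γ⁻¹` over `O` and this property form a group, and for a Cohn matrix
`W(α) J W(α)ᴴ − J` has the single nonzero entry `α u − u ᾱ = −52 imK α ∈ 13 O`. The entries of
`γ J γᴴ` are the three expressions of the theorem; the diagonal ones have the form `z + z̄`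
because `ū = −u`, so they are scalars, and a scalar in `13 O` lies in `13 ℤ` as `O ∩ ℚ = ℤ`. -/

open Matrix

section FormCongruence

variable {A : Type*} [Ring A] [StarRing A] {n : Type*} [Fintype n] [DecidableEq n]

lemma Subring.conjTranspose_mem_matrix {O : Subring A} (hO : ∀ x ∈ O, star x ∈ O)
    {M : Matrix n n A} (hM : M ∈ O.matrix) : Mᴴ ∈ O.matrix :=
  fun i j => hO _ (hM j i)

lemma Subring.mul_mul_conjTranspose_mem_matrix {O : Subring A} (hO : ∀ x ∈ O, star x ∈ O)
    {P E : Matrix n n A} (hP : P ∈ O.matrix) (hE : E ∈ O.matrix) : P * E * Pᴴ ∈ O.matrix :=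
  mul_mem (mul_mem hP hE) (O.conjTranspose_mem_matrix hO hP)

def formCongruenceSubgroup (O : Subring A) (hO : ∀ x ∈ O, star x ∈ O) (J : Matrix n n A)
    (k : ℤ) : Subgroup (Matrix n n A)ˣ where
  carrier := {γ | γ.1 ∈ O.matrix ∧ γ⁻¹.1 ∈ O.matrix ∧ ∃ E ∈ O.matrix, γ.1 * J * γ.1ᴴ = J + k • E}
  one_mem' := ⟨one_mem _, one_mem _, 0, zero_mem _, by simp⟩
  mul_mem' := by
    rintro γ δ ⟨hγ, hγ', E, hE, hγE⟩ ⟨hδ, hδ', F, hF, hδF⟩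
    refine ⟨mul_mem hγ hδ, mul_mem hδ' hγ',
      E + γ.1 * F * γ.1ᴴ, add_mem hE (O.mul_mul_conjTranspose_mem_matrix hO hγ hF), ?_⟩
    calc (γ * δ).1 * J * (γ * δ).1ᴴ = γ.1 * (δ.1 * J * δ.1ᴴ) * γ.1ᴴ := by
          simp only [Units.val_mul, conjTranspose_mul, Matrix.mul_assoc]
      _ = J + k • (E + γ.1 * F * γ.1ᴴ) := by
          rw [hδF, Matrix.mul_add, Matrix.add_mul, hγE, Matrix.mul_smul, Matrix.smul_mul,
            smul_add, add_assoc]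
  inv_mem' := by
    rintro γ ⟨hγ, hγ', E, hE, hγE⟩
    refine ⟨hγ', by simpa using hγ,
      -(γ⁻¹.1 * E * γ⁻¹.1ᴴ), neg_mem (O.mul_mul_conjTranspose_mem_matrix hO hγ' hE), ?_⟩
    have hγ'γ : γ⁻¹.1 * γ.1 = 1 := by simp
    have hγγ' : γ.1ᴴ * γ⁻¹.1ᴴ = 1 := by rw [← conjTranspose_mul, hγ'γ, conjTranspose_one]
    calc γ⁻¹.1 * J * γ⁻¹.1ᴴ
        = γ⁻¹.1 * (γ.1 * J * γ.1ᴴ) * γ⁻¹.1ᴴ - k • (γ⁻¹.1 * E * γ⁻¹.1ᴴ) := by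
          rw [hγE, Matrix.mul_add, Matrix.add_mul, Matrix.mul_smul, Matrix.smul_mul]
          simp only [add_sub_cancel_right]
      _ = J + k • -(γ⁻¹.1 * E * γ⁻¹.1ᴴ) := by
          rw [smul_neg, ← sub_eq_add_neg]
          congr 1
          simp only [← Matrix.mul_assoc, hγ'γ, Matrix.one_mul]
          rw [Matrix.mul_assoc, hγγ', Matrix.mul_one]

def antidiagForm (u : A) : Matrix (Fin 2) (Fin 2) A := !![0, u; -u, 0]

lemma mul_antidiagForm_mul_conjTranspose (γ : Matrix (Fin 2) (Fin 2) A) (u : A) :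
    γ * antidiagForm u * γᴴ =
      !![γ 0 0 * u * star (γ 0 1) - γ 0 1 * u * star (γ 0 0),
          γ 0 0 * u * star (γ 1 1) - γ 0 1 * u * star (γ 1 0);
        γ 1 0 * u * star (γ 0 1) - γ 1 1 * u * star (γ 0 0),
          γ 1 0 * u * star (γ 1 1) - γ 1 1 * u * star (γ 1 0)] := by
  ext i j
  fin_cases i <;> fin_cases j <;>
    simp [antidiagForm, Matrix.mul_apply, Fin.sum_univ_two, sub_eq_add_neg, mul_assoc, add_comm]

lemma cohnUnit_mul_antidiagForm_mul_conjTranspose (α u : A) :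
    (CohnUnit α).1 * antidiagForm u * (CohnUnit α).1ᴴ =
      antidiagForm u + !![α * u - u * star α, 0; 0, 0] := by
  rw [mul_antidiagForm_mul_conjTranspose]
  ext i j
  fin_cases i <;> fin_cases j <;> simp [CohnUnit, antidiagForm]

lemma cohnUnit_mem_formCongruenceSubgroup {O : Subring A} (hO : ∀ x ∈ O, star x ∈ O)
    {α : A} (hα : α ∈ O) (u : A) {k : ℤ} (hk : ∃ o ∈ O, α * u - u * star α = k • o) :
    CohnUnit α ∈ formCongruenceSubgroup O hO (antidiagForm u) k := by
  obtain ⟨o, ho, hαo⟩ := hk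
  have hCohn : ∀ β ∈ O, !![β, 1; -1, 0] ∈ O.matrix ∧ !![0, -1; 1, β] ∈ O.matrix := by
    intro β hβ
    constructor <;> intro i j <;> fin_cases i <;> fin_cases j <;>
      simp [hβ, one_mem, zero_mem]
  refine ⟨(hCohn α hα).1, (hCohn α hα).2, !![o, 0; 0, 0], ?_, ?_⟩
  · intro i j; fin_cases i <;> fin_cases j <;> simp [ho, zero_mem]
  · rw [cohnUnit_mul_antidiagForm_mul_conjTranspose, hαo]
    ext i j; fin_cases i <;> fin_cases j <;> simp

end FormCongruence

theorem QuaternionAlgebra.im_mul_mul_star_sub_mul_mul_star {R : Type*} [CommRing R]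
    {c₁ c₂ c₃ : R} (x y u : ℍ[R,c₁,c₂,c₃]) (hu : star u = -u) :
    (x * u * star y - y * u * star x).im = 0 := by
  have : star (x * u * star y) = -(y * u * star x) := by
    simp [star_mul, hu, mul_assoc]
  rw [sub_eq_add_neg, ← this, QuaternionAlgebra.self_add_star', QuaternionAlgebra.im_coe]

local notation "𝔸" => ℍ[ℚ, -2, -26]

lemma mem_order_iff {x : 𝔸} :
    x ∈ order ↔ ∃ a b c d : ℤ, x = ⟨a + c / 2 + d / 2, b + c / 4 + d / 2, c / 4, d / 4⟩ := by
  simp only [order, Submodule.mem_span_insert, Submodule.mem_span_singleton]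
  constructor
  · rintro ⟨a, _, ⟨b, _, ⟨c, _, ⟨d, rfl⟩, rfl⟩, rfl⟩, rfl⟩
    exact ⟨a, b, c, d, by ext <;> simp <;> ring⟩
  · rintro ⟨a, b, c, d, rfl⟩
    exact ⟨a, _, ⟨b, _, ⟨c, _, ⟨d, rfl⟩, rfl⟩, rfl⟩, by ext <;> simp <;> ring⟩

lemma star_mem_order {x : 𝔸} (hx : x ∈ order) : star x ∈ order := by
  obtain ⟨a, b, c, d, rfl⟩ := mem_order_iff.1 hx
  exact mem_order_iff.2 ⟨a + c + d, -b, -c, -d, by ext <;> simp <;> ring⟩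

lemma mul_mem_order {x y : 𝔸} (hx : x ∈ order) (hy : y ∈ order) : x * y ∈ order := by
  obtain ⟨a₁, b₁, c₁, d₁, rfl⟩ := mem_order_iff.1 hx
  obtain ⟨a₂, b₂, c₂, d₂, rfl⟩ := mem_order_iff.1 hy
  refine mem_order_iff.2 ⟨
    a₁ * a₂ - 2 * b₁ * b₂ - b₁ * c₂ - 2 * c₁ * c₂ - 2 * d₁ * b₂ - d₁ * c₂ - 4 * d₁ * d₂,
    a₁ * b₂ + b₁ * a₂ + b₁ * d₂ + c₁ * b₂ + 2 * c₁ * d₂ - 2 * d₁ * c₂,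
    a₁ * c₂ - 2 * b₁ * d₂ + c₁ * a₂ + c₁ * c₂ + 2 * d₁ * b₂ + d₁ * c₂,
    a₁ * d₂ + b₁ * c₂ - c₁ * b₂ + d₁ * a₂ + d₁ * c₂ + d₁ * d₂, ?_⟩
  ext <;> simp <;> ring

noncomputable def orderSubring : Subring 𝔸 where
  __ := order.toAddSubgroup
  one_mem' := Submodule.subset_span (by simp)
  mul_mem' := mul_mem_order

lemma exists_intCast_eq_of_mem_order {x : 𝔸} (hx : x ∈ order) (him : x.im = 0) :
    ∃ m : ℤ, x = m := by
  obtain ⟨a, b, c, d, rfl⟩ := mem_order_iff.1 hx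
  obtain ⟨hb, rfl, rfl⟩ : (b : ℚ) + c / 4 + d / 2 = 0 ∧ c = 0 ∧ d = 0 := by
    simpa [QuaternionAlgebra.ext_iff] using him
  exact ⟨a, by ext <;> simp_all⟩

-- `α u − u ᾱ = −52 imK α = 13 • (−d)`
lemma exists_mem_order_mul_sub_mul_star {α : 𝔸} (hα : α ∈ order) :
    ∃ o ∈ order, α * ⟨0, 0, 0, 1 / 2⟩ - ⟨0, 0, 0, 1 / 2⟩ * star α = (13 : ℤ) • o := by
  obtain ⟨a, b, c, d, rfl⟩ := mem_order_iff.1 hα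
  refine ⟨-d, mem_order_iff.2 ⟨-d, 0, 0, 0, by ext <;> simp⟩, ?_⟩
  ext <;> simp [QuaternionAlgebra.re_ofNat, QuaternionAlgebra.imI_ofNat,
    QuaternionAlgebra.imJ_ofNat, QuaternionAlgebra.imK_ofNat] <;> ring

lemma exists_int_eq_thirteen_mul_of_im_eq_zero {x o : 𝔸} (ho : o ∈ order)
    (hx : x = (13 : ℤ) • o) (him : x.im = 0) : ∃ m : ℤ, x = ((13 * m : ℤ) : 𝔸) := by
  have hoim : o.im = 0 := by
    rw [hx, QuaternionAlgebra.im_smul, ← Int.cast_smul_eq_zsmul ℚ] at him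
    exact (smul_eq_zero.1 him).resolve_left (by norm_num)
  obtain ⟨m, rfl⟩ := exists_intCast_eq_of_mem_order ho hoim
  exact ⟨m, by rw [hx, zsmul_eq_mul]; push_cast; rfl⟩

lemma cohnSubgroup_le_formCongruenceSubgroup :
    CohnSubgroup ≤ formCongruenceSubgroup orderSubring (fun _ => star_mem_order)
      (antidiagForm ⟨0, 0, 0, 1 / 2⟩) 13 :=
  (Subgroup.closure_le _).2 <| by
    rintro _ ⟨α, hα, rfl⟩
    exact cohnUnit_mem_formCongruenceSubgroup _ hα _ (exists_mem_order_mul_sub_mul_star hα)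

/-- For `γ = [[a,b],[c,d]] ∈ 𝒲` and `u = ij/2` (of norm 13):
(i) `c·u·conj d − d·u·conj c` is a scalar in `13ℤ`;
(ii) `a·u·conj b − b·u·conj a` is a scalar in `13ℤ`;
(iii) `a·u·conj d − b·u·conj c − u ∈ 13·O`. -/
theorem cohn_congruence_neg2_neg26
    (γ : (Matrix (Fin 2) (Fin 2) ℍ[ℚ, -2, -26])ˣ) (hγ : γ ∈ CohnSubgroup)
    (u : ℍ[ℚ, -2, -26]) (hu : u = ⟨0, 0, 0, 1 / 2⟩)
    (a b c d : ℍ[ℚ, -2, -26]) (ha : a = γ.1 0 0) (hb : b = γ.1 0 1)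
    (hc : c = γ.1 1 0) (hd : d = γ.1 1 1) :
    (∃ m : ℤ, c * u * star d - d * u * star c = ((13 * m : ℤ) : ℍ[ℚ, -2, -26])) ∧
    (∃ m : ℤ, a * u * star b - b * u * star a = ((13 * m : ℤ) : ℍ[ℚ, -2, -26])) ∧
    (∃ o ∈ order, a * u * star d - b * u * star c - u = (13 : ℍ[ℚ, -2, -26]) * o) := by
  obtain ⟨-, -, E, hE, hγE⟩ := cohnSubgroup_le_formCongruenceSubgroup hγ
  rw [mul_antidiagForm_mul_conjTranspose, ← hu, ← ha, ← hb, ← hc, ← hd] at hγE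
  have h00 : a * u * star b - b * u * star a = 0 + (13 : ℤ) • E 0 0 :=
    congrFun (congrFun hγE 0) 0
  have h01 : a * u * star d - b * u * star c = u + (13 : ℤ) • E 0 1 :=
    congrFun (congrFun hγE 0) 1
  have h11 : c * u * star d - d * u * star c = 0 + (13 : ℤ) • E 1 1 :=
    congrFun (congrFun hγE 1) 1
  have hu_star : star u = -u := by rw [hu]; ext <;> simp
  refine ⟨exists_int_eq_thirteen_mul_of_im_eq_zero (hE 1 1) (by rw [h11, zero_add])
      (QuaternionAlgebra.im_mul_mul_star_sub_mul_mul_star _ _ _ hu_star),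
    exists_int_eq_thirteen_mul_of_im_eq_zero (hE 0 0) (by rw [h00, zero_add])
      (QuaternionAlgebra.im_mul_mul_star_sub_mul_mul_star _ _ _ hu_star),
    E 0 1, hE 0 1, ?_⟩
  rw [h01, add_sub_cancel_left, zsmul_eq_mul]
  norm_num
end

section
/- Let H = ℍ[ℚ; −2, −26], let O be the ℤ-submodule of H spanned by 1, i, (2 + i + j)/4, (2 + 2i + ij)/4 (a subring of H), set u = ij/2 ∈ O, and let 𝒲 be the subgroup of invertible 2×2 matrices over H generated by the Cohn matrices W(α), α ∈ O. Put ρ = (13 + 13i)/2 + j + (5/4)·ij ∈ H. Then for every γ = [[a, b], [c, d]] ∈ 𝒲, setting κ = c·u·conj(d) − d·u·conj(c), κ' = a·u·conj(b) − b·u·conj(a) (both of which are scalar), and ξ = a·u·conj(d) − b·u·conj(c), the rational number B := (1/2)·(−13·κ' − 13·κ + tr(ρ·conj(ξ))) lies in the set (13/2)·(5 + 13ℤ) = {(13/2)·(5 + 13m) : m ∈ ℤ}; in particular |B| ≥ 65/2. -/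
open Quaternion
open scoped Quaternion

/-!
Write `U = !![0, u; -u, 0]`, so that `κ'`, `ξ`, `κ` are the entries of the Hermitian matrix
`γ U γ*`. Conjugation by a Cohn matrix `W(α)`, `α ∈ O`, preserves the congruence `γ U γ* ≡ U`
modulo `13` (diagonal in `13ℤ`, off-diagonal in `u + 13 O`): the norm and the trace form are
integral on `O`, and `tr(α u) ∈ 13ℤ`. Since `W(α)⁻¹ = W(0) W(-α) W(0)`, this covers all of `𝒲`.
Writing `κ' = 13 k`, `κ = 13 l` and `ξ = u + 13 ω`, we get
`B = ½(-169(k + l) + tr(ρ ū) + 13 tr(ρ ω̄))` with `tr(ρ ū) = 65` and `tr(ρ ω̄) ∈ 13ℤ`,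
so `B ∈ (13/2)(5 + 13ℤ)`.
-/

section Cohn

variable {A : Type*} [Ring A]

theorem cohnUnit_inv (α : A) : (CohnUnit α)⁻¹ = CohnUnit 0 * CohnUnit (-α) * CohnUnit 0 := by
  ext i j
  fin_cases i <;> fin_cases j <;> simp [CohnUnit, Matrix.mul_apply, Fin.sum_univ_two]

theorem closure_cohnUnit_induction {S : Set A} (h0 : (0 : A) ∈ S) (hneg : ∀ α ∈ S, -α ∈ S)
    {P : (Matrix (Fin 2) (Fin 2) A)ˣ → Prop} (one : P 1)
    (mul_left : ∀ α ∈ S, ∀ γ, P γ → P (CohnUnit α * γ)) {γ : (Matrix (Fin 2) (Fin 2) A)ˣ}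
    (hγ : γ ∈ Subgroup.closure {γ | ∃ α ∈ S, γ = CohnUnit α}) : P γ := by
  induction hγ using Subgroup.closure_induction_left with
  | one => exact one
  | mul_left _ hx γ _ ih =>
    obtain ⟨α, hα, rfl⟩ := hx
    exact mul_left α hα γ ih
  | inv_mul_cancel _ hx γ _ ih =>
    obtain ⟨α, hα, rfl⟩ := hx
    rw [cohnUnit_inv, mul_assoc, mul_assoc]
    exact mul_left 0 h0 _ (mul_left (-α) (hneg α hα) _ (mul_left 0 h0 γ ih))

variable [StarRing A]

theorem cohnUnit_mul_mul_star (α : A) (M : Matrix (Fin 2) (Fin 2) A) :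
    (CohnUnit α : Matrix (Fin 2) (Fin 2) A) * M * star (CohnUnit α : Matrix (Fin 2) (Fin 2) A) =
      !![(α * M 0 0 + M 1 0) * star α + α * M 0 1 + M 1 1, -(α * M 0 0 + M 1 0);
        -(M 0 0 * star α + M 0 1), M 0 0] := by
  ext i j
  fin_cases i <;> fin_cases j <;>
    simp [CohnUnit, Matrix.mul_apply, Matrix.vecMul, dotProduct, Fin.sum_univ_two]
  noncomm_ring

theorem mul_antidiag_mul_star_apply (γ : Matrix (Fin 2) (Fin 2) A) (u : A) (i j : Fin 2) :
    (γ * !![0, u; -u, 0] * star γ) i j = γ i 0 * u * star (γ j 1) - γ i 1 * u * star (γ j 0) := by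
  simp [Matrix.mul_apply, Fin.sum_univ_two]
  abel

end Cohn

attribute [local simp] QuaternionAlgebra.re_ofNat QuaternionAlgebra.imI_ofNat
  QuaternionAlgebra.imJ_ofNat QuaternionAlgebra.imK_ofNat

/-- Coordinates in the ℤ-basis `1, i, (2+i+j)/4, (2+2i+ij)/4` of `order`. -/
noncomputable def ofOrderCoords (x y z w : ℤ) : ℍ[ℚ, -2, -26] :=
  ⟨x + z / 2 + w / 2, y + z / 4 + w / 2, z / 4, w / 4⟩

theorem mem_order_iff_s11 {α : ℍ[ℚ, -2, -26]} :
    α ∈ order ↔ ∃ x y z w : ℤ, α = ofOrderCoords x y z w := by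
  constructor
  · intro hα
    induction hα using Submodule.span_induction with
    | mem v hv =>
      rcases hv with rfl | rfl | rfl | rfl
      · exact ⟨1, 0, 0, 0, by ext <;> simp [ofOrderCoords]⟩
      · exact ⟨0, 1, 0, 0, by ext <;> simp [ofOrderCoords]⟩
      · exact ⟨0, 0, 1, 0, by ext <;> simp [ofOrderCoords]⟩
      · exact ⟨0, 0, 0, 1, by ext <;> simp [ofOrderCoords]⟩
    | zero => exact ⟨0, 0, 0, 0, by ext <;> simp [ofOrderCoords]⟩
    | add v w _ _ ihv ihw =>
      obtain ⟨x, y, z, w, rfl⟩ := ihv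
      obtain ⟨x', y', z', w', rfl⟩ := ihw
      exact ⟨x + x', y + y', z + z', w + w', by ext <;> simp [ofOrderCoords] <;> ring⟩
    | smul n v _ ihv =>
      obtain ⟨x, y, z, w, rfl⟩ := ihv
      exact ⟨n * x, n * y, n * z, n * w, by ext <;> simp [ofOrderCoords] <;> ring⟩
  · rintro ⟨x, y, z, w, rfl⟩
    have h : ofOrderCoords x y z w = x • (1 : ℍ[ℚ, -2, -26]) + y • ⟨0, 1, 0, 0⟩
        + z • ⟨1 / 2, 1 / 4, 1 / 4, 0⟩ + w • ⟨1 / 2, 1 / 2, 0, 1 / 4⟩ := by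
      ext <;> simp [ofOrderCoords] <;> ring
    rw [h]
    refine add_mem (add_mem (add_mem ?_ ?_) ?_) ?_ <;>
      exact Submodule.smul_mem _ _ (Submodule.subset_span (by simp))

theorem star_mem_order_s11 {α : ℍ[ℚ, -2, -26]} (hα : α ∈ order) : star α ∈ order := by
  obtain ⟨x, y, z, w, rfl⟩ := mem_order_iff_s11.mp hα
  exact mem_order_iff_s11.mpr ⟨x + z + w, -y, -z, -w, by
    ext <;> simp [ofOrderCoords] <;> ring⟩

theorem exists_mul_star_eq_intCast {α : ℍ[ℚ, -2, -26]} (hα : α ∈ order) :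
    ∃ n : ℤ, α * star α = n := by
  obtain ⟨x, y, z, w, rfl⟩ := mem_order_iff_s11.mp hα
  exact ⟨x ^ 2 + 2 * y ^ 2 + 2 * z ^ 2 + 4 * w ^ 2 + x * z + x * w + y * z + 2 * y * w + z * w,
    by ext <;> simp [ofOrderCoords, sq] <;> ring⟩

theorem exists_trace_mul_eq_intCast {α ω : ℍ[ℚ, -2, -26]} (hα : α ∈ order) (hω : ω ∈ order) :
    ∃ t : ℤ, α * ω + star (α * ω) = t := by
  obtain ⟨x, y, z, w, rfl⟩ := mem_order_iff_s11.mp hα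
  obtain ⟨x', y', z', w', rfl⟩ := mem_order_iff_s11.mp hω
  exact ⟨2 * x * x' + (x * z' + z * x') + (x * w' + w * x') - 4 * y * y' - (y * z' + z * y')
      - 2 * (y * w' + w * y') - 3 * z * z' - 7 * w * w',
    by ext <;> simp [ofOrderCoords]; ring⟩

noncomputable def ijHalf : ℍ[ℚ, -2, -26] := ⟨0, 0, 0, 1 / 2⟩

theorem star_ijHalf : star ijHalf = -ijHalf := by
  ext <;> simp [ijHalf]

theorem exists_trace_mul_ijHalf_eq_thirteen_mul {α : ℍ[ℚ, -2, -26]} (hα : α ∈ order) :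
    ∃ s : ℤ, α * ijHalf + star (α * ijHalf) = 13 * s := by
  obtain ⟨x, y, z, w, rfl⟩ := mem_order_iff_s11.mp hα
  exact ⟨-w, by ext <;> simp [ofOrderCoords, ijHalf]; ring⟩

noncomputable def ballCenter : ℍ[ℚ, -2, -26] := ⟨13 / 2, 13 / 2, 1, 5 / 4⟩

theorem exists_trace_ballCenter_mul_star_eq_thirteen_mul {ω : ℍ[ℚ, -2, -26]} (hω : ω ∈ order) :
    ∃ t : ℤ, ballCenter * star ω + star (ballCenter * star ω) = 13 * t := by
  obtain ⟨x, y, z, w, rfl⟩ := mem_order_iff_s11.mp hω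
  exact ⟨x + 2 * y + 2 * z + 4 * w, by ext <;> simp [ofOrderCoords, ballCenter] <;> ring⟩

theorem trace_ballCenter_mul_star_ijHalf :
    ballCenter * star ijHalf + star (ballCenter * star ijHalf) = 65 := by
  ext <;> simp [ballCenter, ijHalf]; norm_num

/-- `M ≡ !![0, ijHalf; -ijHalf, 0]` modulo `13`. -/
structure IsCongrMod13 (M : Matrix (Fin 2) (Fin 2) ℍ[ℚ, -2, -26]) : Prop where
  isSelfAdjoint : IsSelfAdjoint M
  apply_zero_zero : ∃ k : ℤ, M 0 0 = 13 * k
  apply_one_one : ∃ l : ℤ, M 1 1 = 13 * l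
  apply_zero_one : ∃ ω ∈ order, M 0 1 = ijHalf + 13 * ω

theorem isCongrMod13_antidiag : IsCongrMod13 !![0, ijHalf; -ijHalf, 0] where
  isSelfAdjoint := Matrix.ext fun i j => by
    fin_cases i <;> fin_cases j <;> simp [Matrix.star_apply, star_ijHalf]
  apply_zero_zero := ⟨0, by simp⟩
  apply_one_one := ⟨0, by simp⟩
  apply_zero_one := ⟨0, zero_mem _, by simp⟩

theorem IsCongrMod13.cohnUnit_mul_mul_star {M : Matrix (Fin 2) (Fin 2) ℍ[ℚ, -2, -26]}
    (hM : IsCongrMod13 M) {α : ℍ[ℚ, -2, -26]} (hα : α ∈ order) :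
    IsCongrMod13 ((CohnUnit α : Matrix (Fin 2) (Fin 2) ℍ[ℚ, -2, -26]) * M *
      star (CohnUnit α : Matrix (Fin 2) (Fin 2) ℍ[ℚ, -2, -26])) := by
  obtain ⟨hself, ⟨k, hk⟩, ⟨l, hl⟩, ⟨ω, hω, hξ⟩⟩ := hM
  have hM10 : M 1 0 = star (M 0 1) := (congrFun₂ hself.star_eq 1 0).symm
  have hk_comm : α * (13 * k) = 13 * k * α :=
    ((Commute.ofNat_left 13 α).mul_left (Int.cast_commute k α)).eq.symm
  refine ⟨hself.conjugate _, ?_, ⟨k, ?_⟩, ?_⟩ <;>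
    simp only [_root_.cohnUnit_mul_mul_star, hk, hl, hM10, hξ, Matrix.of_apply, Matrix.cons_val',
      Matrix.cons_val_zero, Matrix.cons_val_one, Matrix.empty_val', Matrix.cons_val_fin_one,
      star_add, star_mul, star_ofNat, star_ijHalf, hk_comm]
  · obtain ⟨n, hn⟩ := exists_mul_star_eq_intCast hα
    obtain ⟨s, hs⟩ := exists_trace_mul_ijHalf_eq_thirteen_mul hα
    obtain ⟨t, ht⟩ := exists_trace_mul_eq_intCast hα hω
    refine ⟨k * n + s + t + l, ?_⟩
    calc _ = 13 * k * (α * star α) + (α * ijHalf + star (α * ijHalf))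
          + 13 * (α * ω + star (α * ω)) + 13 * l := by
          simp only [star_mul, star_ijHalf]
          noncomm_ring
      _ = _ := by rw [hn, hs, ht]; push_cast; noncomm_ring
  · refine ⟨-(k • α) - star ω, sub_mem (neg_mem (zsmul_mem hα k)) (star_mem_order_s11 hω), ?_⟩
    rw [zsmul_eq_mul]
    noncomm_ring

theorem isCongrMod13_of_mem_cohnSubgroup {γ : (Matrix (Fin 2) (Fin 2) ℍ[ℚ, -2, -26])ˣ}
    (hγ : γ ∈ CohnSubgroup) :
    IsCongrMod13 (γ.1 * !![0, ijHalf; -ijHalf, 0] * star γ.1) := by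
  refine closure_cohnUnit_induction
    (P := fun γ => IsCongrMod13 (γ.1 * !![0, ijHalf; -ijHalf, 0] * star γ.1))
    (zero_mem order) (fun _ => neg_mem) ?_ ?_ hγ
  · simpa using isCongrMod13_antidiag
  · intro α hα γ ih
    simpa only [Units.val_mul, star_mul, Matrix.mul_assoc] using ih.cohnUnit_mul_mul_star hα

theorem sixtyFive_div_two_le_abs (m : ℤ) : (65 / 2 : ℚ) ≤ |13 / 2 * (5 + 13 * (m : ℚ))| := by
  rw [le_abs]
  rcases le_or_gt 0 m with hm | hm
  · left
    have hm' : (0 : ℚ) ≤ m := by exact_mod_cast hm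
    linarith
  · right
    have hm' : (m : ℚ) ≤ -1 := by exact_mod_cast Int.le_sub_one_of_lt hm
    linarith

/-- The pairing of the forbidden ball with data `(13, 13, ρ)`,
`ρ = (13+13i)/2 + j + (5/4)ij`, against any sphere `γ.S_u`, `γ ∈ 𝒲`, lies in
`(13/2)·(5 + 13ℤ)`; in particular it has absolute value at least `65/2`. -/
theorem forbidden_ball_neg2_neg26
    (γ : (Matrix (Fin 2) (Fin 2) ℍ[ℚ, -2, -26])ˣ) (hγ : γ ∈ CohnSubgroup)
    (u ρ : ℍ[ℚ, -2, -26]) (hu : u = ⟨0, 0, 0, 1 / 2⟩) (hρ : ρ = ⟨13 / 2, 13 / 2, 1, 5 / 4⟩)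
    (a b c d : ℍ[ℚ, -2, -26]) (ha : a = γ.1 0 0) (hb : b = γ.1 0 1)
    (hc : c = γ.1 1 0) (hd : d = γ.1 1 1)
    (κ κ' ξ B : ℍ[ℚ, -2, -26])
    (hκ : κ = c * u * star d - d * u * star c)
    (hκ' : κ' = a * u * star b - b * u * star a)
    (hξ : ξ = a * u * star d - b * u * star c)
    (hB : B = (2 : ℚ)⁻¹ •
      (-(13 * κ') - 13 * κ + (ρ * star ξ + star (ρ * star ξ)))) :
    ∃ q : ℚ, B = (q : ℍ[ℚ, -2, -26]) ∧
      (∃ m : ℤ, q = 13 / 2 * (5 + 13 * m)) ∧ 65 / 2 ≤ |q| := by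
  obtain rfl : u = ijHalf := hu
  obtain rfl : ρ = ballCenter := hρ
  subst ha hb hc hd hκ hκ' hξ hB
  obtain ⟨-, ⟨k, hk⟩, ⟨l, hl⟩, ⟨ω, hω, hξ⟩⟩ := isCongrMod13_of_mem_cohnSubgroup hγ
  simp only [mul_antidiag_mul_star_apply] at hk hl hξ
  obtain ⟨t, ht⟩ := exists_trace_ballCenter_mul_star_eq_thirteen_mul hω
  have htrace : ballCenter * star (ijHalf + 13 * ω) + star (ballCenter * star (ijHalf + 13 * ω))
      = 65 + 13 * (13 * t) := by
    calc _ = (ballCenter * star ijHalf + star (ballCenter * star ijHalf))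
          + 13 * (ballCenter * star ω + star (ballCenter * star ω)) := by
          simp only [star_add, star_mul, star_star, star_ofNat]
          noncomm_ring
      _ = _ := by rw [trace_ballCenter_mul_star_ijHalf, ht]
  refine ⟨13 / 2 * (5 + 13 * ((t - k - l : ℤ) : ℚ)), ?_, ⟨t - k - l, rfl⟩,
    sixtyFive_div_two_le_abs _⟩
  rw [hk, hl, hξ, htrace]
  ext <;> simp; ring
end
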